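/- arXiv:1805.09549 — 6 statements merged into one kernel-verified Lean document; each statement's English description precedes it below -/
import Mathlib

section
/- Suppose ξ = 0 and ζ λ > 0, and assume ρ ≥ 0. Then the approximated outage probability satisfies ∫_0^∞ W(z) f(z) dz = β(ϑ − ρ)/√(2π) + (α β / (2 √(2π) (ζλ)^{α/2})) [Γ(α/2, ζλ ϑ^{2/α}) − Γ(α/2, ζλ ρ^{2/α})], where Γ(s, x) = ∫_x^∞ t^{s−1} e^{−t} dt is the upper incomplete gamma function. (Proposition 2, the interference-limited dynamic spectrum access outage probability.) -/
open MeasureTheory Set Real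

/-! With `ξ = 0` the SINR is Weibull distributed: `1 - F z = exp (-(ζλ z ^ (2/α)))`.
Since `β (ϑ - ρ) = √(2π)`, `W` is `1` up to `ρ`, falls linearly to `0` at `ϑ` and vanishes
afterwards, so integrating by parts against the density gives
`∫ W f = 1 - (ϑ - ρ)⁻¹ ∫_ρ^ϑ (1 - F)`.
The substitution `t = ζλ z ^ (2/α)` turns the last integral into
`(α/2) (ζλ)^(-α/2) ∫ t ^ (α/2 - 1) e^(-t)` over `[ζλ ρ ^ (2/α), ζλ ϑ ^ (2/α)]`,
a difference of two upper incomplete gamma values. -/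

section Ramp

variable {F G W : ℝ → ℝ} {a b ρ ϑ : ℝ}

theorem integral_sub_mul_of_hasDerivAt_neg (hab : a ≤ b) (hG : ContinuousOn G (Icc a b))
    (hGF : ∀ x ∈ Ioo a b, HasDerivAt G (-F x) x) (hF : IntervalIntegrable F volume a b) :
    ∫ z in a..b, (b - z) * F z = (b - a) * G a - ∫ z in a..b, G z := by
  have hparts := intervalIntegral.integral_mul_deriv_eq_deriv_mul_of_hasDerivAt
    (u := fun z => b - z) (u' := fun _ => -1) (v := G) (v' := fun z => -F z)
    (by fun_prop) (by rwa [uIcc_of_le hab])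
    (fun x _ => (hasDerivAt_id x).const_sub b |>.congr_deriv (by simp))
    (by rwa [min_eq_left hab, max_eq_right hab]) intervalIntegrable_const hF.neg
  simp only [mul_neg, neg_one_mul, intervalIntegral.integral_neg, sub_self, zero_mul] at hparts
  linarith

theorem integral_Ioi_ramp_mul_of_hasDerivAt_neg (hρ : 0 ≤ ρ) (hρϑ : ρ < ϑ)
    (hG : ContinuousOn G (Icc 0 ϑ)) (hGF : ∀ x > 0, HasDerivAt G (-F x) x)
    (hF : IntervalIntegrable F volume 0 ϑ)
    (hW₁ : ∀ z ∈ Ioc 0 ρ, W z = 1) (hW₂ : ∀ z ∈ Ioc ρ ϑ, W z = (ϑ - z) / (ϑ - ρ))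
    (hW₃ : ∀ z ∈ Ioi ϑ, W z = 0) :
    ∫ z in Ioi 0, W z * F z = G 0 - (∫ z in ρ..ϑ, G z) / (ϑ - ρ) := by
  have hF₁ : IntervalIntegrable F volume 0 ρ := hF.mono_set <| by
    rw [uIcc_of_le hρ, uIcc_of_le (hρ.trans hρϑ.le)]; exact Icc_subset_Icc_right hρϑ.le
  have hF₂ : IntervalIntegrable F volume ρ ϑ := hF.mono_set <| by
    rw [uIcc_of_le hρϑ.le, uIcc_of_le (hρ.trans hρϑ.le)]; exact Icc_subset_Icc_left hρ
  have heq₁ : EqOn (fun z => W z * F z) F (Ioc 0 ρ) := fun z hz => by simp [hW₁ z hz]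
  have heq₂ : EqOn (fun z => W z * F z) (fun z => (ϑ - z) * F z / (ϑ - ρ)) (Ioc ρ ϑ) :=
    fun z hz => by simp only [hW₂ z hz]; ring
  have hint₁ : IntegrableOn (fun z => W z * F z) (Ioc 0 ρ) :=
    (integrableOn_congr_fun heq₁ measurableSet_Ioc).mpr
      ((intervalIntegrable_iff_integrableOn_Ioc_of_le hρ).mp hF₁)
  have hint₂ : IntegrableOn (fun z => W z * F z) (Ioc ρ ϑ) :=
    (integrableOn_congr_fun heq₂ measurableSet_Ioc).mpr
      ((intervalIntegrable_iff_integrableOn_Ioc_of_le hρϑ.le).mp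
        ((hF₂.continuousOn_mul (by fun_prop)).div_const _))
  have hvanish : ∀ z ∈ Ioi 0 \ Ioc 0 ϑ, W z * F z = 0 := fun z ⟨hz₀, hz⟩ => by
    rw [hW₃ z (lt_of_not_ge fun h => hz ⟨hz₀, h⟩), zero_mul]
  calc ∫ z in Ioi 0, W z * F z
      = (∫ z in Ioc 0 ρ, W z * F z) + ∫ z in Ioc ρ ϑ, W z * F z := by
        rw [setIntegral_eq_of_subset_of_forall_sdiff_eq_zero measurableSet_Ioi Ioc_subset_Ioi_self
          hvanish, ← Ioc_union_Ioc_eq_Ioc hρ hρϑ.le,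
          setIntegral_union (Ioc_disjoint_Ioc_of_le le_rfl) measurableSet_Ioc hint₁ hint₂]
    _ = (∫ z in (0)..ρ, F z) + (∫ z in ρ..ϑ, (ϑ - z) * F z) / (ϑ - ρ) := by
        rw [setIntegral_congr_fun measurableSet_Ioc heq₁,
          setIntegral_congr_fun measurableSet_Ioc heq₂,
          ← intervalIntegral.integral_of_le hρ, ← intervalIntegral.integral_of_le hρϑ.le,
          intervalIntegral.integral_div]
    _ = (G 0 - G ρ) + ((ϑ - ρ) * G ρ - ∫ z in ρ..ϑ, G z) / (ϑ - ρ) := by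
        rw [integral_sub_mul_of_hasDerivAt_neg hρϑ.le (hG.mono (Icc_subset_Icc_left hρ))
          (fun x hx => hGF x (hρ.trans_lt hx.1)) hF₂]
        congr 1
        have := intervalIntegral.integral_eq_sub_of_hasDerivAt_of_le hρ
          (hG.mono (Icc_subset_Icc_right hρϑ.le)).neg
          (fun x hx => (hGF x hx.1).neg.congr_deriv (neg_neg _)) hF₁
        rw [this, Pi.neg_apply, Pi.neg_apply, neg_sub_neg]
    _ = G 0 - (∫ z in ρ..ϑ, G z) / (ϑ - ρ) := by
        field_simp [(sub_pos.mpr hρϑ).ne']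
        ring

theorem ite_lt_half_sub_mul_eq_div {k θ z : ℝ} (hk : k * (ϑ - ρ) = 1) (hθ : ϑ + ρ = 2 * θ)
    (hz : z ∈ Ioc ρ ϑ) :
    (if z < ϑ then 1 / 2 - k * (z - θ) else 0) = (ϑ - z) / (ϑ - ρ) := by
  have hρϑ : ϑ - ρ ≠ 0 := (sub_pos.mpr (hz.1.trans_le hz.2)).ne'
  rcases hz.2.lt_or_eq with hzϑ | rfl
  · rw [if_pos hzϑ, eq_div_iff hρϑ]
    linear_combination (θ - z) * hk - hθ / 2
  · simp

end Ramp

noncomputable def weibullCCDF (c p z : ℝ) : ℝ := exp (-(c * z ^ p))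

noncomputable def weibullPDF (c p z : ℝ) : ℝ := c * p * z ^ (p - 1) * weibullCCDF c p z

section Weibull

variable {c p s a b x : ℝ}

theorem weibullCCDF_zero (hp : p ≠ 0) : weibullCCDF c p 0 = 1 := by
  simp [weibullCCDF, zero_rpow hp]

theorem continuous_weibullCCDF (hp : 0 ≤ p) : Continuous (weibullCCDF c p) :=
  continuous_exp.comp <| (continuous_const.mul <| continuous_id.rpow_const fun _ => .inr hp).neg

theorem hasDerivAt_weibullCCDF (hx : 0 < x) :
    HasDerivAt (weibullCCDF c p) (-weibullPDF c p x) x := by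
  have h : HasDerivAt (fun z => -(c * z ^ p)) (-(c * (p * x ^ (p - 1)))) x :=
    ((hasDerivAt_rpow_const (.inl hx.ne')).const_mul c).neg
  exact h.exp.congr_deriv (by simp only [weibullPDF, weibullCCDF]; ring)

theorem intervalIntegrable_weibullPDF (hp : 0 < p) :
    IntervalIntegrable (weibullPDF c p) volume a b :=
  ((intervalIntegral.intervalIntegrable_rpow' (by linarith)).const_mul (c * p)).mul_continuousOn
    (continuous_weibullCCDF hp.le).continuousOn

theorem integral_weibullCCDF_eq (hc : 0 < c) (hps : p * s = 1) (hs : 1 ≤ s)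
    (ha : 0 ≤ a) (hb : 0 ≤ b) :
    ∫ z in a..b, weibullCCDF c p z =
      s / c ^ s * ∫ t in c * a ^ p..c * b ^ p, t ^ (s - 1) * exp (-t) := by
  have hp : 0 < p := pos_of_mul_pos_left (hps ▸ one_pos) (by linarith)
  have hinv : ∀ {z}, 0 ≤ z → (c * z ^ p / c) ^ s = z := fun hz => by
    rw [mul_div_cancel_left₀ _ hc.ne', ← rpow_mul hz, hps, rpow_one]
  have hsubst := intervalIntegral.integral_comp_mul_deriv (a := c * a ^ p) (b := c * b ^ p)
    (f := fun t => (t / c) ^ s) (f' := fun t => s * (t / c) ^ (s - 1) / c)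
    (g := weibullCCDF c p)
    (fun t _ => ((hasDerivAt_id t).div_const c).rpow_const (.inr hs) |>.congr_deriv
      (by simp only [id, one_div]; ring))
    (((continuous_id.div_const c).rpow_const fun _ => Or.inr (by linarith)).const_mul s
      |>.div_const c).continuousOn
    (continuous_weibullCCDF hp.le)
  rw [hinv ha, hinv hb] at hsubst
  rw [← hsubst, ← intervalIntegral.integral_const_mul]
  refine intervalIntegral.integral_congr fun t ht => ?_
  have ht : 0 ≤ t := by
    rcases ht with ⟨h, -⟩
    exact (le_min (by positivity) (by positivity)).trans h
  have htc : 0 ≤ t / c := div_nonneg ht hc.le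
  have hccdf : weibullCCDF c p ((t / c) ^ s) = exp (-t) := by
    rw [weibullCCDF, ← rpow_mul htc, mul_comm s, hps, rpow_one, mul_div_cancel₀ _ hc.ne']
  have hcs : c ^ s = c ^ (s - 1) * c := by
    rw [← rpow_add_one hc.ne', sub_add_cancel]
  rw [Function.comp_apply, hccdf, div_rpow ht hc.le, hcs]
  have : 0 < c ^ (s - 1) := rpow_pos_of_pos hc _
  field_simp

end Weibull

theorem integrableOn_Ioi_rpow_mul_exp_neg {s a : ℝ} (hs : 0 < s) (ha : 0 ≤ a) :
    IntegrableOn (fun t : ℝ => t ^ (s - 1) * exp (-t)) (Ioi a) :=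
  ((GammaIntegral_convergent hs).congr_fun (fun _ _ => mul_comm _ _) measurableSet_Ioi).mono_set
    (Ioi_subset_Ioi ha)

theorem stmt_1_general
    (α ζ lam ξ : ℝ) (hα : 2 < α)
    (hξ : ξ = 0) (hζlam : 0 < ζ * lam)
    (f : ℝ → ℝ)
    (hf : ∀ z > (0:ℝ), f z = (2 * ζ * lam / α * z ^ (2/α - 1) + ξ) *
      Real.exp (-(ζ * lam * z ^ (2/α)) - ξ * z))
    (n R θ β ϑ ρ : ℝ) (hn : 0 < n) (hR : 0 < R)
    (hβ : β = Real.sqrt (n / (2 * Real.pi)) * (2 ^ (2 * R) - 1) ^ (-(1:ℝ)/2))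
    (hϑ : ϑ = θ + Real.sqrt (Real.pi / 2) / β)
    (hρ : ρ = θ - Real.sqrt (Real.pi / 2) / β)
    (hρ0 : 0 ≤ ρ)
    (W : ℝ → ℝ)
    (hW : ∀ t, W t = if t ≤ ρ then 1
      else if t < ϑ then 1/2 - β / Real.sqrt (2 * Real.pi) * (t - θ) else 0)
    (Ginc : ℝ → ℝ → ℝ)
    (hG : ∀ s x, Ginc s x = ∫ t in Set.Ioi x, t ^ (s - 1) * Real.exp (-t)) :
    ∫ z in Set.Ioi (0:ℝ), W z * f z =
      β * (ϑ - ρ) / Real.sqrt (2 * Real.pi)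
        + α * β / ((ζ * lam) ^ (α/2) * 2 * Real.sqrt (2 * Real.pi)) *
          (Ginc (α/2) (ζ * lam * ϑ ^ (2/α)) - Ginc (α/2) (ζ * lam * ρ ^ (2/α))) := by
  have hp : 0 < 2 / α := by positivity
  have hβ0 : 0 < β := by
    have : 0 < (2:ℝ) ^ (2 * R) - 1 := sub_pos.mpr (one_lt_rpow one_lt_two (by positivity))
    rw [hβ]; positivity
  have hwidth : ϑ - ρ = √(2 * π) / β := by
    rw [hϑ, hρ, show 2 * π = 2 ^ 2 * (π / 2) by ring, sqrt_mul (by positivity),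
      sqrt_sq zero_le_two]
    ring
  have hρϑ : ρ < ϑ := sub_pos.mp (hwidth ▸ by positivity)
  have hW₂ : ∀ z ∈ Ioc ρ ϑ, W z = (ϑ - z) / (ϑ - ρ) := by
    intro z hz
    rw [hW, if_neg hz.1.not_ge]
    exact ite_lt_half_sub_mul_eq_div (by rw [hwidth]; field_simp) (by rw [hϑ, hρ]; ring) hz
  have hWf : ∀ z ∈ Ioi 0, W z * f z = W z * weibullPDF (ζ * lam) (2 / α) z := by
    intro z hz
    simp only [hf z hz, hξ, zero_mul, add_zero, sub_zero, weibullPDF, weibullCCDF]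
    ring
  have hGamma : ∀ {x : ℝ}, 0 ≤ x → IntegrableOn (fun t : ℝ => t ^ (α / 2 - 1) * exp (-t))
      (Ioi (ζ * lam * x ^ (2 / α))) := fun hx =>
    integrableOn_Ioi_rpow_mul_exp_neg (by positivity) (mul_nonneg hζlam.le (rpow_nonneg hx _))
  have hϑ0 : 0 ≤ ϑ := hρ0.trans hρϑ.le
  rw [setIntegral_congr_fun measurableSet_Ioi hWf,
    integral_Ioi_ramp_mul_of_hasDerivAt_neg hρ0 hρϑ (continuous_weibullCCDF hp.le).continuousOn
      (fun x hx => hasDerivAt_weibullCCDF hx) (intervalIntegrable_weibullPDF hp)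
      (fun z hz => by rw [hW, if_pos hz.2]) hW₂
      (fun z hz => by rw [hW, if_neg (hρϑ.trans hz).not_ge, if_neg hz.not_gt]),
    integral_weibullCCDF_eq (s := α / 2) hζlam (by field_simp) (by linarith) hρ0 hϑ0,
    hG, hG, intervalIntegral.integral_Ioi_sub_Ioi' (hGamma hϑ0) (hGamma hρ0),
    intervalIntegral.integral_symm, weibullCCDF_zero hp.ne', hwidth]
  field_simp
  ring

/-- Proposition 2: the interference-limited (`ξ = 0`) dynamic spectrum access
approximated outage probability, expressed via the upper incomplete gamma
function `Γ(s,x) = ∫_x^∞ t^(s-1) e^(−t) dt`. -/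
theorem stmt_1
    (α ζ lam ξ : ℝ) (hα : 2 < α) (hζ : 0 ≤ ζ) (hlam : 0 ≤ lam)
    (hξ : ξ = 0) (hζlam : 0 < ζ * lam)
    (f : ℝ → ℝ)
    (hf : ∀ z > (0:ℝ), f z = (2 * ζ * lam / α * z ^ (2/α - 1) + ξ) *
      Real.exp (-(ζ * lam * z ^ (2/α)) - ξ * z))
    (n R θ β ϑ ρ : ℝ) (hn : 0 < n) (hR : 0 < R)
    (hθ : θ = 2 ^ R - 1)
    (hβ : β = Real.sqrt (n / (2 * Real.pi)) * (2 ^ (2 * R) - 1) ^ (-(1:ℝ)/2))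
    (hϑ : ϑ = θ + Real.sqrt (Real.pi / 2) / β)
    (hρ : ρ = θ - Real.sqrt (Real.pi / 2) / β)
    (hρ0 : 0 ≤ ρ)
    (W : ℝ → ℝ)
    (hW : ∀ t, W t = if t ≤ ρ then 1
      else if t < ϑ then 1/2 - β / Real.sqrt (2 * Real.pi) * (t - θ) else 0)
    (Ginc : ℝ → ℝ → ℝ)
    (hG : ∀ s x, Ginc s x = ∫ t in Set.Ioi x, t ^ (s - 1) * Real.exp (-t)) :
    ∫ z in Set.Ioi (0:ℝ), W z * f z =
      β * (ϑ - ρ) / Real.sqrt (2 * Real.pi)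
        + α * β / ((ζ * lam) ^ (α/2) * 2 * Real.sqrt (2 * Real.pi)) *
          (Ginc (α/2) (ζ * lam * ϑ ^ (2/α)) - Ginc (α/2) (ζ * lam * ρ ^ (2/α))) :=
  stmt_1_general α ζ lam ξ hα hξ hζlam f hf n R θ β ϑ ρ hn hR hβ hϑ hρ hρ0 W hW Ginc hG
end

section
/- Suppose ξ = 0, α = 4 and ζ λ > 0, and assume ρ ≥ 0. Then the approximated outage probability satisfies ∫_0^∞ W(z) f(z) dz = β(ϑ − ρ)/√(2π) + (2β/(√(2π)(ζλ)^2)) [ e^{−ζλ√ϑ}(ζλ√ϑ + 1) − e^{−ζλ√ρ}(ζλ√ρ + 1) ]. (Corollary 1, the interference-limited outage probability for dense urban scenarios with path-loss exponent 4.) -/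
/-!
With `ξ = 0` and `α = 4` the SINR density is `f z = c / (2√z) · e^{-c√z}` (`c = ζλ`), the derivative
of the CDF `F z = 1 - e^{-c√z}`. The weight `W` is the ramp that equals `1` up to `ρ`, falls
linearly to `0` at `ϑ` (its slope `β/√(2π)` is exactly `1/(ϑ - ρ)`), and vanishes afterwards.
Integrating by parts, `∫ W f = (ϑ - ρ)⁻¹ ∫_ρ^ϑ F`, and `z + 2/c² · e^{-c√z}(c√z + 1)` is a
primitive of `F`.
-/

open MeasureTheory Set Real

noncomputable def ramp (a b t : ℝ) : ℝ :=
  if t ≤ a then 1 else if t < b then (b - t) / (b - a) else 0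

section Ramp

variable {a b : ℝ}

theorem ramp_eqOn_Iic : EqOn (ramp a b) 1 (Iic a) := fun _ ht => if_pos ht

theorem ramp_eqOn_Icc (hab : a < b) : EqOn (ramp a b) (fun t => (b - t) / (b - a)) (Icc a b) := by
  intro t ⟨hat, htb⟩
  unfold ramp
  rcases hat.eq_or_lt with rfl | hat
  · simp [div_self (sub_ne_zero.2 hab.ne')]
  rcases htb.lt_or_eq with htb | rfl
  · simp [hat.not_ge, htb]
  · simp [hat.not_ge]

theorem ramp_eq_zero (hab : a < b) {t : ℝ} (ht : b ≤ t) : ramp a b t = 0 := by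
  simp [ramp, (hab.trans_le ht).not_ge, ht.not_gt]

theorem setIntegral_Ioi_ramp_mul_eq {f F : ℝ → ℝ} (ha : 0 ≤ a) (hab : a < b)
    (hF : ContinuousOn F (Icc 0 b)) (hF0 : F 0 = 0)
    (hFf : ∀ x ∈ Ioo 0 b, HasDerivAt F (f x) x) (hf₀ : ∀ x ∈ Ioo 0 b, 0 ≤ f x) :
    ∫ z in Ioi 0, ramp a b z * f z = (∫ z in a..b, F z) / (b - a) := by
  have hb : 0 ≤ b := ha.trans hab.le
  have hba : b - a ≠ 0 := sub_ne_zero.2 hab.ne'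
  have hf : IntervalIntegrable f volume 0 b :=
    intervalIntegral.intervalIntegrable_deriv_of_nonneg (by rwa [uIcc_of_le hb])
      (by simpa [hb] using hFf) (by simpa [hb] using hf₀)
  have hf₁ : IntervalIntegrable f volume 0 a := hf.mono_set (by
    rw [uIcc_of_le ha, uIcc_of_le hb]; exact Icc_subset_Icc_right hab.le)
  have hf₂ : IntervalIntegrable f volume a b := hf.mono_set (by
    rw [uIcc_of_le hab.le, uIcc_of_le hb]; exact Icc_subset_Icc_left ha)
  have hlin : ContinuousOn (fun t => (b - t) / (b - a)) (uIcc a b) := by fun_prop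
  have hlow : EqOn (fun z => ramp a b z * f z) f (uIcc 0 a) := fun z hz => by
    dsimp only
    rw [ramp_eqOn_Iic (by simpa [ha] using hz.2 : z ≤ a), Pi.one_apply, one_mul]
  have hhigh : EqOn (fun z => ramp a b z * f z) (fun z => (b - z) / (b - a) * f z) (uIcc a b) :=
    fun z hz => by dsimp only; rw [ramp_eqOn_Icc hab (by simpa [hab.le] using hz)]
  have hFa : ∫ z in (0)..a, f z = F a := by
    rw [intervalIntegral.integral_eq_sub_of_hasDerivAt_of_le ha (hF.mono (Icc_subset_Icc_right hab.le))
      (fun x hx => hFf x ⟨hx.1, hx.2.trans hab⟩) hf₁, hF0, sub_zero]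
  have hparts : ∫ z in a..b, (b - z) / (b - a) * f z = -F a + (∫ z in a..b, F z) / (b - a) := by
    rw [intervalIntegral.integral_mul_deriv_eq_deriv_mul_of_hasDerivAt (u' := fun _ => -1 / (b - a))
      hlin (hF.mono (by simp [uIcc_of_le hab.le, Icc_subset_Icc_left ha]))
      (fun x _ => ((hasDerivAt_id x).const_sub b).div_const (b - a) |>.congr_deriv (by simp))
      (fun x hx => hFf x ⟨ha.trans_lt (by simpa [hab.le] using hx.1), by simpa [hab.le] using hx.2⟩)
      intervalIntegrable_const hf₂, intervalIntegral.integral_const_mul]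
    field_simp
    ring
  calc ∫ z in Ioi 0, ramp a b z * f z = ∫ z in (0)..b, ramp a b z * f z := by
        rw [intervalIntegral.integral_of_le hb]
        refine setIntegral_eq_of_subset_of_forall_sdiff_eq_zero measurableSet_Ioi Ioc_subset_Ioi_self ?_
        rintro z ⟨hz₀, hz⟩
        rw [ramp_eq_zero hab (not_le.1 fun h => hz ⟨hz₀, h⟩).le, zero_mul]
    _ = (∫ z in (0)..a, ramp a b z * f z) + ∫ z in a..b, ramp a b z * f z :=
        (intervalIntegral.integral_add_adjacent_intervals
          ((intervalIntegrable_congr (hlow.mono Ioc_subset_Icc_self)).2 hf₁)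
          ((intervalIntegrable_congr (hhigh.mono Ioc_subset_Icc_self)).2 (hf₂.continuousOn_mul hlin))).symm
    _ = (∫ z in a..b, F z) / (b - a) := by
        rw [intervalIntegral.integral_congr hlow, intervalIntegral.integral_congr hhigh, hFa, hparts]
        ring

end Ramp

section SqrtExp

variable (c : ℝ) {x : ℝ}

theorem hasDerivAt_one_sub_exp_neg_mul_sqrt (hx : 0 < x) :
    HasDerivAt (fun z => 1 - exp (-(c * √z))) (c / (2 * √x) * exp (-(c * √x))) x := by
  refine ((((hasDerivAt_sqrt hx.ne').const_mul c).neg.exp).const_sub 1).congr_deriv ?_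
  simp only [Pi.neg_apply]
  ring

theorem hasDerivAt_exp_neg_mul_sqrt_mul_add_one (hx : 0 < x) :
    HasDerivAt (fun z => exp (-(c * √z)) * (c * √z + 1)) (-(c ^ 2 / 2) * exp (-(c * √x))) x := by
  have hsqrt := (hasDerivAt_sqrt hx.ne').const_mul c
  refine (hsqrt.neg.exp.mul (hsqrt.add_const 1)).congr_deriv ?_
  simp only [Pi.neg_apply]
  field_simp
  ring

theorem integral_one_sub_exp_neg_mul_sqrt {c a b : ℝ} (hc : c ≠ 0) (ha : 0 ≤ a) (hab : a ≤ b) :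
    ∫ z in a..b, (1 - exp (-(c * √z))) =
      b - a + 2 / c ^ 2 * (exp (-(c * √b)) * (c * √b + 1) - exp (-(c * √a)) * (c * √a + 1)) := by
  have hG : ∀ x ∈ Ioo a b, HasDerivAt (fun z => z + 2 / c ^ 2 * (exp (-(c * √z)) * (c * √z + 1)))
      (1 - exp (-(c * √x))) x := fun x hx => by
    refine ((hasDerivAt_id' x).add ((hasDerivAt_exp_neg_mul_sqrt_mul_add_one c
      (ha.trans_lt hx.1)).const_mul (2 / c ^ 2))).congr_deriv ?_
    field_simp
    ring
  rw [intervalIntegral.integral_eq_sub_of_hasDerivAt_of_le hab (by fun_prop) hG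
    (by apply Continuous.intervalIntegrable; fun_prop)]
  ring

theorem stmt_2_general
    (α ζ lam ξ : ℝ) (hα4 : α = 4)
    (hξ : ξ = 0) (hζlam : 0 < ζ * lam)
    (f : ℝ → ℝ)
    (hf : ∀ z > (0:ℝ), f z = (2 * ζ * lam / α * z ^ (2/α - 1) + ξ) *
      Real.exp (-(ζ * lam * z ^ (2/α)) - ξ * z))
    (n R θ β ϑ ρ : ℝ) (hn : 0 < n) (hR : 0 < R)
    (hβ : β = Real.sqrt (n / (2 * Real.pi)) * (2 ^ (2 * R) - 1) ^ (-(1:ℝ)/2))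
    (hϑ : ϑ = θ + Real.sqrt (Real.pi / 2) / β)
    (hρ : ρ = θ - Real.sqrt (Real.pi / 2) / β)
    (hρ0 : 0 ≤ ρ)
    (W : ℝ → ℝ)
    (hW : ∀ t, W t = if t ≤ ρ then 1
      else if t < ϑ then 1/2 - β / Real.sqrt (2 * Real.pi) * (t - θ) else 0) :
    ∫ z in Set.Ioi (0:ℝ), W z * f z =
      β * (ϑ - ρ) / Real.sqrt (2 * Real.pi)
        + 2 * β / (Real.sqrt (2 * Real.pi) * (ζ * lam) ^ 2) *
          (Real.exp (-(ζ * lam * Real.sqrt ϑ)) * (ζ * lam * Real.sqrt ϑ + 1)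
            - Real.exp (-(ζ * lam * Real.sqrt ρ)) * (ζ * lam * Real.sqrt ρ + 1)) := by
  set c := ζ * lam
  have hβ0 : 0 < β := by
    have : 1 < (2 : ℝ) ^ (2 * R) := one_lt_rpow (by norm_num) (by positivity)
    rw [hβ]
    exact mul_pos (sqrt_pos.2 (by positivity)) (rpow_pos_of_pos (by linarith) _)
  have hsqrt_two_pi : √(2 * π) = 2 * √(π / 2) := by
    rw [show 2 * π = 2 ^ 2 * (π / 2) by ring, sqrt_mul (by positivity), sqrt_sq zero_le_two]
  have hp : 0 < √(π / 2) := sqrt_pos.2 (by positivity)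
  have hρϑ : ρ < ϑ := by
    rw [hρ, hϑ]; have := div_pos hp hβ0; linarith
  have hwidth : ϑ - ρ = √(2 * π) / β := by rw [hϑ, hρ, hsqrt_two_pi]; ring
  have hWramp : W = ramp ρ ϑ := funext fun t => by
    rw [hW, ramp, hwidth, hϑ, hsqrt_two_pi]
    congr 2
    field_simp
    ring
  have hf' : ∀ x > 0, f x = c / (2 * √x) * exp (-(c * √x)) := fun x hx => by
    rw [hf x hx, hα4, hξ, show (2 : ℝ) / 4 = 1 / 2 by norm_num, ← sqrt_eq_rpow,
      show (1 : ℝ) / 2 - 1 = -(1 / 2) by norm_num, rpow_neg hx.le, ← sqrt_eq_rpow]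
    simp only [c, zero_mul, add_zero, sub_zero]
    ring
  have hfF : ∀ x ∈ Ioo 0 ϑ, HasDerivAt (fun z => 1 - exp (-(c * √z))) (f x) x := fun x hx => by
    rw [hf' x hx.1]
    exact hasDerivAt_one_sub_exp_neg_mul_sqrt c hx.1
  rw [hWramp, setIntegral_Ioi_ramp_mul_eq hρ0 hρϑ (by fun_prop) (by simp) hfF
    (fun x hx => by rw [hf' x hx.1]; positivity),
    integral_one_sub_exp_neg_mul_sqrt hζlam.ne' hρ0 hρϑ.le, hwidth]
  field_simp

/-- Corollary 1: the interference-limited (`ξ = 0`) approximated outage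
probability for dense urban scenarios with path-loss exponent `α = 4`. -/
theorem stmt_2
    (α ζ lam ξ : ℝ) (hα : 2 < α) (hα4 : α = 4) (hζ : 0 ≤ ζ) (hlam : 0 ≤ lam)
    (hξ : ξ = 0) (hζlam : 0 < ζ * lam)
    (f : ℝ → ℝ)
    (hf : ∀ z > (0:ℝ), f z = (2 * ζ * lam / α * z ^ (2/α - 1) + ξ) *
      Real.exp (-(ζ * lam * z ^ (2/α)) - ξ * z))
    (n R θ β ϑ ρ : ℝ) (hn : 0 < n) (hR : 0 < R)
    (hθ : θ = 2 ^ R - 1)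
    (hβ : β = Real.sqrt (n / (2 * Real.pi)) * (2 ^ (2 * R) - 1) ^ (-(1:ℝ)/2))
    (hϑ : ϑ = θ + Real.sqrt (Real.pi / 2) / β)
    (hρ : ρ = θ - Real.sqrt (Real.pi / 2) / β)
    (hρ0 : 0 ≤ ρ)
    (W : ℝ → ℝ)
    (hW : ∀ t, W t = if t ≤ ρ then 1
      else if t < ϑ then 1/2 - β / Real.sqrt (2 * Real.pi) * (t - θ) else 0) :
    ∫ z in Set.Ioi (0:ℝ), W z * f z =
      β * (ϑ - ρ) / Real.sqrt (2 * Real.pi)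
        + 2 * β / (Real.sqrt (2 * Real.pi) * (ζ * lam) ^ 2) *
          (Real.exp (-(ζ * lam * Real.sqrt ϑ)) * (ζ * lam * Real.sqrt ϑ + 1)
            - Real.exp (-(ζ * lam * Real.sqrt ρ)) * (ζ * lam * Real.sqrt ρ + 1)) :=
  stmt_2_general α ζ lam ξ hα4 hξ hζlam f hf n R θ β ϑ ρ hn hR hβ hϑ hρ hρ0 W hW
end SqrtExp
end

section
/- Let c ≥ 0, d > 0 and 0 ≤ a ≤ b. Then ∫_a^b ((c/2)√z + d z) e^{−c√z − d z} dz = (a + 1/d) e^{−c√a − d a} − (b + 1/d) e^{−c√b − d b} + (c √π /(2 d^{3/2})) e^{c²/(4d)} [ erf(c/(2√d) + √(d a)) − erf(c/(2√d) + √(d b)) ], where erf(x) = (2/√π) ∫_0^x e^{−u²} du. (The key integral identity of Appendix C, evaluating ∫ z f(z) dz for the SINR density with α = 4 and noise term ξ = d, ζλ = c.) -/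
open MeasureTheory Set Real

/-!
The integrand is the derivative of
`F z = -(z + 1/d) e^(-c√z - dz) - c/(d√d) · e^(c²/(4d)) · E(c/(2√d) + √(dz))`,
where `E y = ∫₀^y e^(-u²) du`. The product rule on the first term produces the integrand plus
`c/(2d√z) · e^(-c√z - dz)`, and completing the square,
`(c/(2√d) + √(dz))² = c²/(4d) + c√z + dz`, shows that the chain rule on the second term cancels it.
The identity is then the fundamental theorem of calculus on `[a, b]`, where `F` is differentiable
away from `z = 0`.
-/

theorem hasDerivAt_integral_exp_neg_sq (x : ℝ) :
    HasDerivAt (fun y => ∫ u in (0:ℝ)..y, exp (-u ^ 2)) (exp (-x ^ 2)) x := by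
  have hcont : Continuous fun u : ℝ => exp (-u ^ 2) := by fun_prop
  exact intervalIntegral.integral_hasDerivAt_right (hcont.intervalIntegrable 0 x)
    hcont.stronglyMeasurable.stronglyMeasurableAtFilter hcont.continuousAt

theorem div_two_sqrt_add_sqrt_mul_sq {c d z : ℝ} (hd : 0 < d) (hz : 0 ≤ z) :
    (c / (2 * √d) + √(d * z)) ^ 2 = c ^ 2 / (4 * d) + c * √z + d * z := by
  rw [sqrt_mul hd.le, add_sq, div_pow, mul_pow, mul_pow, sq_sqrt hd.le, sq_sqrt hz]
  field_simp
  ring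

theorem hasDerivAt_exp_neg_mul_sqrt_sub_mul (c d : ℝ) {z : ℝ} (hz : 0 < z) :
    HasDerivAt (fun z => exp (-(c * √z) - d * z))
      (-(c / (2 * √z) + d) * exp (-(c * √z) - d * z)) z := by
  refine (((hasDerivAt_sqrt hz.ne').const_mul c).neg.sub ((hasDerivAt_id z).const_mul d)).exp
    |>.congr_deriv ?_
  simp only [Pi.neg_apply, Pi.sub_apply, id_eq]
  ring

theorem hasDerivAt_erf_antideriv {c d z : ℝ} (hd : 0 < d) (hz : 0 < z) :
    HasDerivAt (fun z => c / (d * √d) * exp (c ^ 2 / (4 * d)) *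
        ∫ u in (0:ℝ)..c / (2 * √d) + √(d * z), exp (-u ^ 2))
      (c / (2 * d * √z) * exp (-(c * √z) - d * z)) z := by
  have hsqrt : HasDerivAt (fun z => √(d * z)) (√d / (2 * √z)) z := by
    refine ((hasDerivAt_sqrt (mul_pos hd hz).ne').comp z ((hasDerivAt_id z).const_mul d))
      |>.congr_deriv ?_
    rw [sqrt_mul hd.le]
    field_simp
    rw [sq_sqrt hd.le]
  refine ((hasDerivAt_integral_exp_neg_sq _).comp z (hsqrt.const_add (c / (2 * √d)))).const_mul
    (c / (d * √d) * exp (c ^ 2 / (4 * d))) |>.congr_deriv ?_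
  have hexp : exp (-(c / (2 * √d) + √(d * z)) ^ 2)
      = (exp (c ^ 2 / (4 * d)))⁻¹ * exp (-(c * √z) - d * z) := by
    rw [div_two_sqrt_add_sqrt_mul_sq hd hz.le, ← exp_neg, ← exp_add]
    ring_nf
  rw [hexp]
  field_simp

theorem integral_sqrt_mul_exp_neg_mul_sqrt_sub_mul {c d a b : ℝ} (hd : 0 < d) (ha : 0 ≤ a)
    (hab : a ≤ b) :
    ∫ z in a..b, (c / 2 * √z + d * z) * exp (-(c * √z) - d * z) =
      (a + 1 / d) * exp (-(c * √a) - d * a) - (b + 1 / d) * exp (-(c * √b) - d * b)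
        + c / (d * √d) * exp (c ^ 2 / (4 * d)) *
          ((∫ u in (0:ℝ)..c / (2 * √d) + √(d * a), exp (-u ^ 2))
            - ∫ u in (0:ℝ)..c / (2 * √d) + √(d * b), exp (-u ^ 2)) := by
  have hF : ∀ z ∈ Ioo a b, HasDerivAt
      (fun z => -(z + 1 / d) * exp (-(c * √z) - d * z) - c / (d * √d) * exp (c ^ 2 / (4 * d)) *
        ∫ u in (0:ℝ)..c / (2 * √d) + √(d * z), exp (-u ^ 2))
      ((c / 2 * √z + d * z) * exp (-(c * √z) - d * z)) z := by
    intro z hz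
    have hz0 : 0 < z := ha.trans_lt hz.1
    refine (((hasDerivAt_id z).add_const (1 / d)).neg.mul
      (hasDerivAt_exp_neg_mul_sqrt_sub_mul c d hz0)).sub (hasDerivAt_erf_antideriv hd hz0)
      |>.congr_deriv ?_
    simp only [Pi.neg_apply, id_eq]
    field_simp
    linear_combination (-(c * d)) * mul_self_sqrt hz0.le
  rw [intervalIntegral.integral_eq_sub_of_hasDerivAt_of_le hab
    (Continuous.continuousOn (by fun_prop)) hF (Continuous.intervalIntegrable (by fun_prop) a b)]
  ring

theorem stmt_3_general
    (c d a b : ℝ) (hd : 0 < d) (ha : 0 ≤ a) (hab : a ≤ b)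
    (erf : ℝ → ℝ)
    (herf : ∀ x, erf x = 2 / Real.sqrt Real.pi * ∫ u in (0:ℝ)..x, Real.exp (-u^2)) :
    ∫ z in a..b, (c/2 * Real.sqrt z + d * z) * Real.exp (-(c * Real.sqrt z) - d * z) =
      (a + 1/d) * Real.exp (-(c * Real.sqrt a) - d * a)
        - (b + 1/d) * Real.exp (-(c * Real.sqrt b) - d * b)
        + c * Real.sqrt Real.pi / (2 * d ^ ((3:ℝ)/2)) * Real.exp (c^2 / (4*d)) *
          (erf (c / (2 * Real.sqrt d) + Real.sqrt (d * a))
            - erf (c / (2 * Real.sqrt d) + Real.sqrt (d * b))) := by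
  have hd32 : d ^ ((3:ℝ) / 2) = d * √d := by
    rw [show (3:ℝ) / 2 = 1 + 1 / 2 by norm_num, rpow_add hd, rpow_one, ← sqrt_eq_rpow]
  rw [integral_sqrt_mul_exp_neg_mul_sqrt_sub_mul hd ha hab, herf, herf, hd32]
  field_simp

/-- The key integral identity of Appendix C: for `c ≥ 0`, `d > 0`, `0 ≤ a ≤ b`,
`∫_a^b ((c/2)√z + dz) e^(−c√z − dz) dz` has the stated closed form in terms of the
Gauss error function `erf(x) = (2/√π) ∫_0^x e^(−u²) du`. -/
theorem stmt_3
    (c d a b : ℝ) (hc : 0 ≤ c) (hd : 0 < d) (ha : 0 ≤ a) (hab : a ≤ b)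
    (erf : ℝ → ℝ)
    (herf : ∀ x, erf x = 2 / Real.sqrt Real.pi * ∫ u in (0:ℝ)..x, Real.exp (-u^2)) :
    ∫ z in a..b, (c/2 * Real.sqrt z + d * z) * Real.exp (-(c * Real.sqrt z) - d * z) =
      (a + 1/d) * Real.exp (-(c * Real.sqrt a) - d * a)
        - (b + 1/d) * Real.exp (-(c * Real.sqrt b) - d * b)
        + c * Real.sqrt Real.pi / (2 * d ^ ((3:ℝ)/2)) * Real.exp (c^2 / (4*d)) *
          (erf (c / (2 * Real.sqrt d) + Real.sqrt (d * a))
            - erf (c / (2 * Real.sqrt d) + Real.sqrt (d * b))) :=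
  stmt_3_general c d a b hd ha hab erf herf
end

section
/- The function g is strictly increasing on (0, ∞). (The monotonicity of the argument of the Q-function in the finite-blocklength outage expression, asserted in Appendix A.) -/
open Set Real

/-!
With `u = 1 + t` one has `√V(t) = √(u² - 1) / (u log 2)`, so
`g(t) = √n · (log u - R log 2) · u / √(u² - 1)` (natural logarithms). The derivative of
`u ↦ (log u - a) u / √(u² - 1)` is `(u² - 1 - log u + a) / (u² - 1)^{3/2}`, which is positive
for `a ≥ 0` because `log u ≤ u - 1 < u² - 1` when `u > 1`.
-/

noncomputable def normalizedLogGap (a u : ℝ) : ℝ := (log u - a) * u / √(u ^ 2 - 1)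

theorem hasDerivAt_normalizedLogGap (a : ℝ) {u : ℝ} (hu : 1 < u) :
    HasDerivAt (normalizedLogGap a) ((u ^ 2 - 1 - (log u - a)) / √(u ^ 2 - 1) ^ 3) u := by
  have hu0 : 0 < u := by linarith
  have hq : 0 < u ^ 2 - 1 := by nlinarith
  have hS : 0 < √(u ^ 2 - 1) := sqrt_pos.2 hq
  have hS2 : √(u ^ 2 - 1) ^ 2 = u ^ 2 - 1 := sq_sqrt hq.le
  have hnum : HasDerivAt (fun u => (log u - a) * u) (u⁻¹ * u + (log u - a) * 1) u :=
    ((hasDerivAt_log hu0.ne').sub_const a).mul (hasDerivAt_id u)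
  have hden : HasDerivAt (fun u => √(u ^ 2 - 1)) (2 * u / (2 * √(u ^ 2 - 1))) u := by
    simpa using ((hasDerivAt_pow 2 u).sub_const 1).sqrt hq.ne'
  refine (hnum.div hden hS.ne').congr_deriv ?_
  field_simp
  linear_combination (1 + log u - a) * hS2

theorem strictMonoOn_normalizedLogGap {a : ℝ} (ha : 0 ≤ a) :
    StrictMonoOn (normalizedLogGap a) (Ioi 1) := by
  refine strictMonoOn_of_hasDerivWithinAt_pos (convex_Ioi 1)
    (fun u hu => (hasDerivAt_normalizedLogGap a hu).continuousAt.continuousWithinAt)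
    (fun u hu => (hasDerivAt_normalizedLogGap a (by rwa [interior_Ioi] at hu)).hasDerivWithinAt)
    fun u hu => ?_
  replace hu : 1 < u := by rwa [interior_Ioi] at hu
  have hlog : log u ≤ u - 1 := log_le_sub_one_of_pos (by linarith)
  have hnum : 0 < u ^ 2 - 1 - (log u - a) := by nlinarith
  have hS : 0 < √(u ^ 2 - 1) := sqrt_pos.2 (by nlinarith)
  positivity

theorem sqrt_one_sub_rpow_neg_two_mul_logb_exp_sq {u : ℝ} (hu : 0 < u) :
    √((1 - u ^ (-(2:ℝ))) * logb 2 (exp 1) ^ 2) = √(u ^ 2 - 1) / (u * log 2) := by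
  have hlog2 : 0 < log 2 := log_pos one_lt_two
  have hrpow : u ^ (-(2:ℝ)) = (u ^ 2)⁻¹ := by
    rw [rpow_neg hu.le]; norm_cast
  have : (1 - u ^ (-(2:ℝ))) * logb 2 (exp 1) ^ 2 = (u ^ 2 - 1) / (u * log 2) ^ 2 := by
    rw [hrpow, logb, log_exp]
    field_simp
  rw [this, sqrt_div' _ (sq_nonneg _), sqrt_sq (by positivity)]

/-- The argument `g` of the Q-function in the finite-blocklength outage
expression is strictly increasing on `(0, ∞)` (Appendix A). -/
theorem stmt_10
    (n R : ℝ) (hn : 0 < n) (hR : 0 < R)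
    (V g : ℝ → ℝ)
    (hV : ∀ t, V t = (1 - (1 + t) ^ (-(2:ℝ))) * (Real.logb 2 (Real.exp 1))^2)
    (hg : ∀ t > (0:ℝ), g t = Real.sqrt n * (Real.logb 2 (1 + t) - R) / Real.sqrt (V t)) :
    StrictMonoOn g (Set.Ioi (0:ℝ)) := by
  have hg_eq : ∀ t > (0:ℝ), g t = √n * normalizedLogGap (R * log 2) (1 + t) := by
    intro t ht
    rw [hg t ht, hV, sqrt_one_sub_rpow_neg_two_mul_logb_exp_sq (by linarith), normalizedLogGap,
      logb]
    field_simp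
  intro s hs t ht hst
  rw [hg_eq s hs, hg_eq t ht]
  refine mul_lt_mul_of_pos_left ?_ (sqrt_pos.2 hn)
  exact strictMonoOn_normalizedLogGap (by positivity) (by simpa using hs) (by simpa using ht)
    (by linarith)
end

section
/- Fix α > 2, ζ λ > 0, n > 0 and R > 0, and assume ρ ≥ 0. Write f(z | ξ) for the SINR PDF with noise parameter ξ. Then the approximated outage probability is nondecreasing in the noise level: for all 0 ≤ ξ₁ ≤ ξ₂, ∫_0^∞ W(z) f(z | ξ₁) dz ≤ ∫_0^∞ W(z) f(z | ξ₂) dz. (As the noise level increases, the outage probability increases.) -/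
open MeasureTheory Set Real

/-!
Write `S_ξ(z) = exp (-ζλ z^(2/α) - ξ z)`, so that `f(·|ξ) = -S_ξ'` on `(0, ∞)` and `S_ξ(0) = 1`.
Because `θ` is the midpoint of `[ρ, ϑ]` and `β / √(2π) = 1 / (ϑ - ρ)`, the weight `W` is the ramp
equal to `1` up to `ρ`, falling linearly to `0` at `ϑ`. Integrating by parts,
`∫ W f(·|ξ) = 1 - (ϑ - ρ)⁻¹ ∫_ρ^ϑ S_ξ`, and `S_ξ(z)` is nonincreasing in `ξ` for `z ≥ 0`.
-/

namespace SINR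

variable {C q ξ : ℝ}

noncomputable def survival (C q ξ z : ℝ) : ℝ := exp (-(C * z ^ q) - ξ * z)

noncomputable def density (C q ξ z : ℝ) : ℝ := (C * q * z ^ (q - 1) + ξ) * survival C q ξ z

theorem continuous_survival (hq : 0 < q) : Continuous (survival C q ξ) := by
  unfold survival
  have : Continuous fun z : ℝ => z ^ q := continuous_rpow_const hq.le
  fun_prop

theorem hasDerivAt_survival {z : ℝ} (hz : 0 < z) :
    HasDerivAt (survival C q ξ) (-density C q ξ z) z := by
  have hexponent :
      HasDerivAt (fun z : ℝ => -(C * z ^ q) - ξ * z) (-(C * (q * z ^ (q - 1))) - ξ) z := by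
    simpa using ((hasDerivAt_rpow_const (p := q) (Or.inl hz.ne')).const_mul C).fun_neg.fun_sub
      ((hasDerivAt_id z).const_mul ξ)
  refine hexponent.exp.congr_deriv ?_
  unfold density survival
  ring

theorem survival_le_survival_of_le {ξ₁ ξ₂ z : ℝ} (hz : 0 ≤ z) (h : ξ₁ ≤ ξ₂) :
    survival C q ξ₂ z ≤ survival C q ξ₁ z := by
  unfold survival
  gcongr

theorem intervalIntegrable_density (hq : 0 < q) (a b : ℝ) :
    IntervalIntegrable (density C q ξ) volume a b :=
  (((intervalIntegral.intervalIntegrable_rpow' (by linarith)).const_mul (C * q)).add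
    intervalIntegrable_const).mul_continuousOn (continuous_survival hq).continuousOn

theorem integral_density {a b : ℝ} (hq : 0 < q) (ha : 0 ≤ a) (hab : a ≤ b) :
    ∫ z in a..b, density C q ξ z = survival C q ξ a - survival C q ξ b := by
  rw [intervalIntegral.integral_eq_sub_of_hasDerivAt_of_le hab
    (continuous_survival hq).neg.continuousOn
    (fun z hz => by simpa using (hasDerivAt_survival (ha.trans_lt hz.1)).neg)
    (intervalIntegrable_density hq a b)]
  simp only [Pi.neg_apply]
  ring

theorem integral_sub_div_mul_density {a b : ℝ} (hq : 0 < q) (ha : 0 ≤ a) (hab : a < b) :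
    ∫ z in a..b, (b - z) / (b - a) * density C q ξ z
      = survival C q ξ a - (∫ z in a..b, survival C q ξ z) / (b - a) := by
  have hba : b - a ≠ 0 := (sub_pos.2 hab).ne'
  rw [intervalIntegral.integral_mul_deriv_eq_deriv_mul_of_hasDerivAt (v := -survival C q ξ)
    (u' := fun _ => -(b - a)⁻¹) (by fun_prop) (continuous_survival hq).neg.continuousOn
    (fun z _ => by simpa [neg_div] using ((hasDerivAt_id z).const_sub b).div_const (b - a))
    (fun z hz => by
      simpa using (hasDerivAt_survival ((ha.trans (le_min le_rfl hab.le)).trans_lt hz.1)).neg)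
    intervalIntegrable_const (intervalIntegrable_density hq a b)]
  simp only [Pi.neg_apply, sub_self, zero_div, zero_mul, div_self hba, neg_mul_neg,
    intervalIntegral.integral_const_mul]
  field_simp
  ring

noncomputable def rampDown (ρ ϑ t : ℝ) : ℝ := max 0 (min 1 ((ϑ - t) / (ϑ - ρ)))

variable {ρ ϑ t : ℝ}

theorem continuous_rampDown : Continuous (rampDown ρ ϑ) := by
  unfold rampDown
  fun_prop

theorem rampDown_of_le (h : ρ < ϑ) (ht : t ≤ ρ) : rampDown ρ ϑ t = 1 := by
  have : 1 ≤ (ϑ - t) / (ϑ - ρ) := by rw [le_div_iff₀ (by linarith)]; linarith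
  simp [rampDown, this]

theorem rampDown_of_mem_Icc (h : ρ < ϑ) (ht : t ∈ Icc ρ ϑ) :
    rampDown ρ ϑ t = (ϑ - t) / (ϑ - ρ) := by
  have h0 : 0 ≤ (ϑ - t) / (ϑ - ρ) := div_nonneg (by linarith [ht.2]) (by linarith)
  have h1 : (ϑ - t) / (ϑ - ρ) ≤ 1 := by rw [div_le_one (by linarith)]; linarith [ht.1]
  simp [rampDown, h0, h1]

theorem rampDown_of_ge (h : ρ ≤ ϑ) (ht : ϑ ≤ t) : rampDown ρ ϑ t = 0 := by
  have : (ϑ - t) / (ϑ - ρ) ≤ 0 := div_nonpos_of_nonpos_of_nonneg (by linarith) (by linarith)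
  simp [rampDown, this]

theorem rampDown_eq_ite {θ c : ℝ} (hρϑ : ρ < ϑ) (hθ : 2 * θ = ρ + ϑ) (hc : c * (ϑ - ρ) = 1)
    (t : ℝ) :
    rampDown ρ ϑ t = if t ≤ ρ then 1 else if t < ϑ then 1 / 2 - c * (t - θ) else 0 := by
  split_ifs with hρt hϑt
  · exact rampDown_of_le hρϑ hρt
  · rw [rampDown_of_mem_Icc hρϑ ⟨(not_le.1 hρt).le, hϑt.le⟩, div_eq_iff (sub_pos.2 hρϑ).ne']
    linear_combination (t - θ) * hc - hθ / 2
  · exact rampDown_of_ge hρϑ.le (not_lt.1 hϑt)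

theorem integral_rampDown_mul_density (hq : 0 < q) (hρ : 0 ≤ ρ) (hρϑ : ρ < ϑ) :
    ∫ z in Ioi 0, rampDown ρ ϑ z * density C q ξ z
      = 1 - (∫ z in ρ..ϑ, survival C q ξ z) / (ϑ - ρ) := by
  have hint (a b : ℝ) : IntervalIntegrable (fun z => rampDown ρ ϑ z * density C q ξ z) volume a b :=
    (intervalIntegrable_density hq a b).continuousOn_mul continuous_rampDown.continuousOn
  have hflat : ∫ z in 0..ρ, rampDown ρ ϑ z * density C q ξ z = 1 - survival C q ξ ρ := by
    rw [intervalIntegral.integral_congr (g := density C q ξ) fun z hz => by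
      rw [rampDown_of_le hρϑ (uIcc_of_le hρ ▸ hz).2, one_mul], integral_density hq le_rfl hρ]
    simp [survival, zero_rpow hq.ne']
  have hslope : ∫ z in ρ..ϑ, rampDown ρ ϑ z * density C q ξ z
      = survival C q ξ ρ - (∫ z in ρ..ϑ, survival C q ξ z) / (ϑ - ρ) := by
    rw [← integral_sub_div_mul_density hq hρ hρϑ]
    refine intervalIntegral.integral_congr fun z hz => ?_
    rw [rampDown_of_mem_Icc hρϑ (uIcc_of_le hρϑ.le ▸ hz)]
  calc ∫ z in Ioi 0, rampDown ρ ϑ z * density C q ξ z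
      = ∫ z in Ioc 0 ϑ, rampDown ρ ϑ z * density C q ξ z :=
        setIntegral_eq_of_subset_of_forall_sdiff_eq_zero measurableSet_Ioi Ioc_subset_Ioi_self
          fun z hz => by
            rw [rampDown_of_ge hρϑ.le (le_of_lt (not_le.1 fun h => hz.2 ⟨hz.1, h⟩)), zero_mul]
    _ = (∫ z in 0..ρ, rampDown ρ ϑ z * density C q ξ z)
          + ∫ z in ρ..ϑ, rampDown ρ ϑ z * density C q ξ z := by
        rw [intervalIntegral.integral_add_adjacent_intervals (hint 0 ρ) (hint ρ ϑ),
          intervalIntegral.integral_of_le (hρ.trans hρϑ.le)]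
    _ = 1 - (∫ z in ρ..ϑ, survival C q ξ z) / (ϑ - ρ) := by
        rw [hflat, hslope]
        ring

theorem monotone_integral_rampDown_mul_density (hq : 0 < q) (hρ : 0 ≤ ρ) (hρϑ : ρ < ϑ) :
    Monotone fun ξ => ∫ z in Ioi 0, rampDown ρ ϑ z * density C q ξ z := by
  intro ξ₁ ξ₂ h
  have hmono : ∫ z in ρ..ϑ, survival C q ξ₂ z ≤ ∫ z in ρ..ϑ, survival C q ξ₁ z :=
    intervalIntegral.integral_mono_on hρϑ.le ((continuous_survival hq).intervalIntegrable ρ ϑ)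
      ((continuous_survival hq).intervalIntegrable ρ ϑ)
      fun z hz => survival_le_survival_of_le (hρ.trans hz.1) h
  have : 0 < ϑ - ρ := sub_pos.2 hρϑ
  simp only [integral_rampDown_mul_density hq hρ hρϑ]
  gcongr

end SINR

open SINR in
theorem stmt_14_general
    (α ζ lam : ℝ) (hα : 2 < α)
    (f : ℝ → ℝ → ℝ)
    (hf : ∀ ξ : ℝ, ∀ z > (0:ℝ), f ξ z = (2 * ζ * lam / α * z ^ (2/α - 1) + ξ) *
      Real.exp (-(ζ * lam * z ^ (2/α)) - ξ * z))
    (n R θ β ϑ ρ : ℝ) (hn : 0 < n) (hR : 0 < R)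
    (hβ : β = Real.sqrt (n / (2 * Real.pi)) * (2 ^ (2 * R) - 1) ^ (-(1:ℝ)/2))
    (hϑ : ϑ = θ + Real.sqrt (Real.pi / 2) / β)
    (hρ : ρ = θ - Real.sqrt (Real.pi / 2) / β)
    (hρ0 : 0 ≤ ρ)
    (W : ℝ → ℝ)
    (hW : ∀ t, W t = if t ≤ ρ then 1
      else if t < ϑ then 1/2 - β / Real.sqrt (2 * Real.pi) * (t - θ) else 0) :
    ∀ ξ₁ ξ₂ : ℝ, 0 ≤ ξ₁ → ξ₁ ≤ ξ₂ →
      ∫ z in Set.Ioi (0:ℝ), W z * f ξ₁ z ≤ ∫ z in Set.Ioi (0:ℝ), W z * f ξ₂ z := by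
  intro ξ₁ ξ₂ _ h
  have hβ0 : 0 < β := by
    have : 1 < (2 : ℝ) ^ (2 * R) := one_lt_rpow one_lt_two (by positivity)
    rw [hβ]
    exact mul_pos (sqrt_pos.2 (by positivity)) (rpow_pos_of_pos (by linarith) _)
  have hρϑ : ρ < ϑ := by
    have : 0 < √(π / 2) / β := by positivity
    linarith
  have hc : β / √(2 * π) * (ϑ - ρ) = 1 := by
    have : √(2 * π) = 2 * √(π / 2) := by
      rw [show 2 * π = 2 ^ 2 * (π / 2) by ring, sqrt_mul (by norm_num), sqrt_sq (by norm_num)]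
    rw [hϑ, hρ, this]
    field_simp
    ring
  have hWramp : W = rampDown ρ ϑ := funext fun t => by
    rw [hW, rampDown_eq_ite (θ := θ) hρϑ (by linarith) hc]
  have hfdensity (ξ : ℝ) : ∫ z in Ioi 0, W z * f ξ z
      = ∫ z in Ioi 0, rampDown ρ ϑ z * density (ζ * lam) (2 / α) ξ z :=
    setIntegral_congr_fun measurableSet_Ioi fun z hz => by
      rw [hWramp, hf ξ z hz, density, survival]
      ring
  rw [hfdensity, hfdensity]
  exact monotone_integral_rampDown_mul_density (by positivity) hρ0 hρϑ h

/-- The approximated outage probability is nondecreasing in the noise level: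
for `0 ≤ ξ₁ ≤ ξ₂`, `∫_0^∞ W(z) f(z|ξ₁) dz ≤ ∫_0^∞ W(z) f(z|ξ₂) dz`. -/
theorem stmt_14
    (α ζ lam : ℝ) (hα : 2 < α) (hζlam : 0 < ζ * lam)
    (f : ℝ → ℝ → ℝ)
    (hf : ∀ ξ : ℝ, ∀ z > (0:ℝ), f ξ z = (2 * ζ * lam / α * z ^ (2/α - 1) + ξ) *
      Real.exp (-(ζ * lam * z ^ (2/α)) - ξ * z))
    (n R θ β ϑ ρ : ℝ) (hn : 0 < n) (hR : 0 < R)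
    (hθ : θ = 2 ^ R - 1)
    (hβ : β = Real.sqrt (n / (2 * Real.pi)) * (2 ^ (2 * R) - 1) ^ (-(1:ℝ)/2))
    (hϑ : ϑ = θ + Real.sqrt (Real.pi / 2) / β)
    (hρ : ρ = θ - Real.sqrt (Real.pi / 2) / β)
    (hρ0 : 0 ≤ ρ)
    (W : ℝ → ℝ)
    (hW : ∀ t, W t = if t ≤ ρ then 1
      else if t < ϑ then 1/2 - β / Real.sqrt (2 * Real.pi) * (t - θ) else 0) :
    ∀ ξ₁ ξ₂ : ℝ, 0 ≤ ξ₁ → ξ₁ ≤ ξ₂ →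
      ∫ z in Set.Ioi (0:ℝ), W z * f ξ₁ z ≤ ∫ z in Set.Ioi (0:ℝ), W z * f ξ₂ z :=
  stmt_14_general α ζ lam hα f hf n R θ β ϑ ρ hn hR hβ hϑ hρ hρ0 W hW
end

section
/- Fix α > 2, λ > 0, d > 0, W_p > 0, η ≥ 0, κ > 0, n > 0 and R > 0, and assume ρ ≥ 0. For a transmit power W_s > 0, set ζ(W_s) = κ π d² (W_p/W_s)^{2/α} and ξ(W_s) = η d^α / W_s, and write f(z | W_s) for the SINR PDF with these parameters. Then the approximated outage probability is nonincreasing in the transmit power: for all 0 < W_s^{(1)} ≤ W_s^{(2)}, ∫_0^∞ W(z) f(z | W_s^{(2)}) dz ≤ ∫_0^∞ W(z) f(z | W_s^{(1)}) dz. (As the reference-link transmit power increases, the link reaches a higher reliability level.) -/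
/-!
Integrating by parts against the ramp `W`, which is constant outside `[ρ, ϑ]` and has slope
`-c = -β/√(2π)` on it, turns the approximated outage probability into
`1 - c ∫_ρ^ϑ P(SINR > z) dz`. The tail `P(SINR > z) = exp(-ζλ z^(2/α) - ξ z)` increases with
`W_s`, because both `ζ` and `ξ` decrease with `W_s`.
-/

open MeasureTheory Set Real

/-- With `a = ζλ`, `b = ξ`, `p = 2/α` this is the complementary CDF `P(SINR > z)`. -/
noncomputable def sinrCcdf (a b p z : ℝ) : ℝ := exp (-(a * z ^ p) - b * z)

noncomputable def sinrPdf (a b p z : ℝ) : ℝ := (a * p * z ^ (p - 1) + b) * sinrCcdf a b p z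

section SinrDistribution

variable {a b p : ℝ}

theorem continuous_sinrCcdf (hp : 0 ≤ p) : Continuous (sinrCcdf a b p) := by
  unfold sinrCcdf
  fun_prop (disch := exact hp)

theorem sinrCcdf_zero (hp : 0 < p) : sinrCcdf a b p 0 = 1 := by
  simp [sinrCcdf, zero_rpow hp.ne']

theorem hasDerivAt_sinrCcdf {z : ℝ} (hz : 0 < z) :
    HasDerivAt (sinrCcdf a b p) (-sinrPdf a b p z) z := by
  have hpow : HasDerivAt (fun z : ℝ => z ^ p) (p * z ^ (p - 1)) z :=
    hasDerivAt_rpow_const (Or.inl hz.ne')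
  have hexponent : HasDerivAt (fun z => -(a * z ^ p) - b * z)
      (-(a * (p * z ^ (p - 1))) - b * 1) z :=
    (hpow.const_mul a).neg.sub ((hasDerivAt_id z).const_mul b)
  refine hexponent.exp.congr_deriv ?_
  rw [sinrPdf, sinrCcdf]
  ring

theorem intervalIntegrable_mul_sinrPdf (hp : 0 < p) {g : ℝ → ℝ} (hg : Continuous g)
    (x y : ℝ) : IntervalIntegrable (fun z => g z * sinrPdf a b p z) volume x y := by
  have hG := continuous_sinrCcdf (a := a) (b := b) hp.le
  have hsplit : (fun z => g z * sinrPdf a b p z)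
      = fun z => z ^ (p - 1) * (a * p * (g z * sinrCcdf a b p z))
          + b * (g z * sinrCcdf a b p z) := by
    funext z
    simp only [sinrPdf]
    ring
  rw [hsplit]
  exact ((intervalIntegral.intervalIntegrable_rpow' (by linarith)).mul_continuousOn
    (by fun_prop)).add ((by fun_prop : Continuous _).intervalIntegrable x y)

theorem intervalIntegrable_sinrPdf (hp : 0 < p) (x y : ℝ) :
    IntervalIntegrable (sinrPdf a b p) volume x y := by
  simpa using intervalIntegrable_mul_sinrPdf (a := a) (b := b) hp continuous_const x y (g := 1)

theorem integral_sinrPdf (hp : 0 < p) {x : ℝ} (hx : 0 ≤ x) :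
    ∫ z in 0..x, sinrPdf a b p z = 1 - sinrCcdf a b p x := by
  rw [intervalIntegral.integral_eq_sub_of_hasDerivAt_of_le (f := fun z => -sinrCcdf a b p z) hx
    (continuous_sinrCcdf hp.le).neg.continuousOn
    (fun z hz => (hasDerivAt_sinrCcdf hz.1).neg.congr_deriv (neg_neg _))
    (intervalIntegrable_sinrPdf hp 0 x), sinrCcdf_zero hp]
  ring

theorem integral_affine_mul_sinrPdf (hp : 0 < p) (k c θ : ℝ) {x y : ℝ} (hx : 0 ≤ x)
    (hy : 0 ≤ y) :
    ∫ z in x..y, (k - c * (z - θ)) * sinrPdf a b p z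
      = (k - c * (x - θ)) * sinrCcdf a b p x - (k - c * (y - θ)) * sinrCcdf a b p y
        - c * ∫ z in x..y, sinrCcdf a b p z := by
  have hG := continuous_sinrCcdf (a := a) (b := b) hp.le
  have hL : ∀ z, HasDerivAt (fun z => k - c * (z - θ)) (-c) z := fun z => by
    simpa using (((hasDerivAt_id z).sub_const θ).const_mul c).const_sub k
  rw [intervalIntegral.integral_mul_deriv_eq_deriv_mul_of_hasDerivAt
    (v := fun z => -sinrCcdf a b p z) (by fun_prop) hG.neg.continuousOn
    (fun z _ => hL z)
    (fun z hz =>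
      (hasDerivAt_sinrCcdf (lt_of_le_of_lt (le_min hx hy) hz.1)).neg.congr_deriv (neg_neg _))
    intervalIntegrable_const (intervalIntegrable_sinrPdf hp x y)]
  simp only [neg_mul_neg, intervalIntegral.integral_const_mul]
  ring

theorem sinrCcdf_le_sinrCcdf {a' b' z : ℝ} (ha : a' ≤ a) (hb : b' ≤ b) (hz : 0 ≤ z) :
    sinrCcdf a b p z ≤ sinrCcdf a' b' p z := by
  unfold sinrCcdf
  gcongr

theorem integral_sinrCcdf_le_integral_sinrCcdf (hp : 0 ≤ p) {a' b' x y : ℝ} (ha : a' ≤ a)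
    (hb : b' ≤ b) (hx : 0 ≤ x) (hxy : x ≤ y) :
    ∫ z in x..y, sinrCcdf a b p z ≤ ∫ z in x..y, sinrCcdf a' b' p z :=
  intervalIntegral.integral_mono_on hxy ((continuous_sinrCcdf hp).intervalIntegrable x y)
    ((continuous_sinrCcdf hp).intervalIntegrable x y)
    fun _ hz => sinrCcdf_le_sinrCcdf ha hb (hx.trans hz.1)

end SinrDistribution

section Ramp

variable {c θ ρ ϑ : ℝ}

theorem ramp_eq_clamp (hc : 0 < c) (hρ : c * (ρ - θ) = -(1 / 2)) (hϑ : c * (ϑ - θ) = 1 / 2)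
    (t : ℝ) :
    (if t ≤ ρ then 1 else if t < ϑ then 1 / 2 - c * (t - θ) else 0)
      = max 0 (min 1 (1 / 2 - c * (t - θ))) := by
  split_ifs with h₁ h₂
  · have : c * (t - θ) ≤ c * (ρ - θ) := by gcongr
    rw [min_eq_left (by linarith), max_eq_right zero_le_one]
  · have : c * (ρ - θ) < c * (t - θ) := by gcongr; linarith
    have : c * (t - θ) < c * (ϑ - θ) := by gcongr
    rw [min_eq_right (by linarith), max_eq_right (by linarith)]
  · have : c * (ϑ - θ) ≤ c * (t - θ) := by gcongr; linarith
    rw [max_eq_left ((min_le_right _ _).trans (by linarith))]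

theorem integral_ramp_mul_sinrPdf {a b p : ℝ} (hp : 0 < p) (hc : 0 < c) (hρ₀ : 0 ≤ ρ)
    (hρ : c * (ρ - θ) = -(1 / 2)) (hϑ : c * (ϑ - θ) = 1 / 2) {W : ℝ → ℝ}
    (hW : ∀ t, W t = if t ≤ ρ then 1 else if t < ϑ then 1 / 2 - c * (t - θ) else 0) :
    ∫ z in Ioi 0, W z * sinrPdf a b p z = 1 - c * ∫ z in ρ..ϑ, sinrCcdf a b p z := by
  have hρϑ : ρ ≤ ϑ := by nlinarith
  have hW_clamp : ∀ t, W t = max 0 (min 1 (1 / 2 - c * (t - θ))) :=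
    fun t => (hW t).trans (ramp_eq_clamp hc hρ hϑ t)
  have hint := intervalIntegrable_mul_sinrPdf (a := a) (b := b) hp
    (by rw [funext hW_clamp]; fun_prop : Continuous W)
  have hW_one : ∀ z ∈ uIcc 0 ρ, W z * sinrPdf a b p z = 1 * sinrPdf a b p z := by
    intro z hz
    rw [hW, if_pos (uIcc_of_le hρ₀ ▸ hz).2]
  have hW_affine : ∀ z ∈ uIcc ρ ϑ,
      W z * sinrPdf a b p z = (1 / 2 - c * (z - θ)) * sinrPdf a b p z := by
    intro z hz
    rw [uIcc_of_le hρϑ] at hz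
    have : c * (ρ - θ) ≤ c * (z - θ) := by gcongr; exact hz.1
    have : c * (z - θ) ≤ c * (ϑ - θ) := by gcongr; exact hz.2
    rw [hW_clamp, min_eq_right (by linarith), max_eq_right (by linarith)]
  calc ∫ z in Ioi 0, W z * sinrPdf a b p z
      = ∫ z in 0..ϑ, W z * sinrPdf a b p z := by
        rw [intervalIntegral.integral_of_le (hρ₀.trans hρϑ)]
        refine setIntegral_eq_of_subset_of_forall_sdiff_eq_zero measurableSet_Ioi
          Ioc_subset_Ioi_self fun z hz => ?_
        have hϑz : ϑ < z := not_le.1 fun h => hz.2 ⟨hz.1, h⟩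
        rw [hW, if_neg (by linarith), if_neg (by linarith), zero_mul]
    _ = (∫ z in 0..ρ, W z * sinrPdf a b p z) + ∫ z in ρ..ϑ, W z * sinrPdf a b p z :=
        (intervalIntegral.integral_add_adjacent_intervals (hint 0 ρ) (hint ρ ϑ)).symm
    _ = (1 - sinrCcdf a b p ρ) + (sinrCcdf a b p ρ - c * ∫ z in ρ..ϑ, sinrCcdf a b p z) := by
        rw [intervalIntegral.integral_congr hW_one, intervalIntegral.integral_congr hW_affine]
        simp only [one_mul, integral_sinrPdf hp hρ₀,
          integral_affine_mul_sinrPdf hp _ _ _ hρ₀ (hρ₀.trans hρϑ), hρ, hϑ]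
        ring
    _ = 1 - c * ∫ z in ρ..ϑ, sinrCcdf a b p z := by ring

end Ramp

theorem div_sqrt_two_pi_mul_sqrt_pi_div_two_div {β : ℝ} (hβ : β ≠ 0) :
    β / √(2 * π) * (√(π / 2) / β) = 1 / 2 := by
  rw [div_mul_div_comm, mul_comm β, mul_div_mul_right _ _ hβ, ← sqrt_div (by positivity),
    show π / 2 / (2 * π) = (1 / 2) ^ 2 by field_simp, sqrt_sq (by norm_num)]

theorem stmt_15_general
    (α lam d Wp η κ : ℝ)
    (hα : 2 < α) (hlam : 0 < lam) (hd : 0 < d) (hWp : 0 < Wp) (hη : 0 ≤ η) (hκ : 0 < κ)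
    (ζ ξ : ℝ → ℝ)
    (hζ : ∀ Ws > (0:ℝ), ζ Ws = κ * Real.pi * d ^ 2 * (Wp / Ws) ^ (2/α))
    (hξ : ∀ Ws > (0:ℝ), ξ Ws = η * d ^ α / Ws)
    (f : ℝ → ℝ → ℝ)
    (hf : ∀ Ws > (0:ℝ), ∀ z > (0:ℝ),
      f Ws z = (2 * ζ Ws * lam / α * z ^ (2/α - 1) + ξ Ws) *
        Real.exp (-(ζ Ws * lam * z ^ (2/α)) - ξ Ws * z))
    (n R θ β ϑ ρ : ℝ) (hn : 0 < n) (hR : 0 < R)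
    (hβ : β = Real.sqrt (n / (2 * Real.pi)) * (2 ^ (2 * R) - 1) ^ (-(1:ℝ)/2))
    (hϑ : ϑ = θ + Real.sqrt (Real.pi / 2) / β)
    (hρ : ρ = θ - Real.sqrt (Real.pi / 2) / β)
    (hρ0 : 0 ≤ ρ)
    (Wfn : ℝ → ℝ)
    (hWfn : ∀ t, Wfn t = if t ≤ ρ then 1
      else if t < ϑ then 1/2 - β / Real.sqrt (2 * Real.pi) * (t - θ) else 0) :
    ∀ Ws₁ Ws₂ : ℝ, 0 < Ws₁ → Ws₁ ≤ Ws₂ →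
      ∫ z in Set.Ioi (0:ℝ), Wfn z * f Ws₂ z ≤ ∫ z in Set.Ioi (0:ℝ), Wfn z * f Ws₁ z := by
  intro Ws₁ Ws₂ hWs₁ hle
  have hp : 0 < 2 / α := div_pos two_pos (by linarith)
  have hβ₀ : 0 < β := by
    have : (1 : ℝ) < 2 ^ (2 * R) := one_lt_rpow (by norm_num) (by linarith)
    rw [hβ]
    exact mul_pos (sqrt_pos.2 (by positivity)) (rpow_pos_of_pos (by linarith) _)
  set c := β / √(2 * π)
  have hc : 0 < c := div_pos hβ₀ (sqrt_pos.2 (by positivity))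
  have hhalf := div_sqrt_two_pi_mul_sqrt_pi_div_two_div hβ₀.ne'
  have hρθ : c * (ρ - θ) = -(1 / 2) := by rw [hρ]; linear_combination -hhalf
  have hϑθ : c * (ϑ - θ) = 1 / 2 := by rw [hϑ]; linear_combination hhalf
  have houtage : ∀ Ws > 0, ∫ z in Ioi 0, Wfn z * f Ws z
      = 1 - c * ∫ z in ρ..ϑ, sinrCcdf (ζ Ws * lam) (ξ Ws) (2 / α) z := fun Ws hWs => by
    rw [← integral_ramp_mul_sinrPdf hp hc hρ0 hρθ hϑθ hWfn]
    refine setIntegral_congr_fun measurableSet_Ioi fun z hz => ?_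
    rw [hf Ws hWs z hz, sinrPdf, sinrCcdf]
    ring
  have hWs₂ : 0 < Ws₂ := hWs₁.trans_le hle
  have hζ_anti : ζ Ws₂ * lam ≤ ζ Ws₁ * lam := by
    rw [hζ Ws₁ hWs₁, hζ Ws₂ hWs₂]
    gcongr
  have hξ_anti : ξ Ws₂ ≤ ξ Ws₁ := by
    rw [hξ Ws₁ hWs₁, hξ Ws₂ hWs₂]
    have : 0 < d ^ α := rpow_pos_of_pos hd α
    gcongr
  rw [houtage Ws₁ hWs₁, houtage Ws₂ hWs₂]
  gcongr
  exact integral_sinrCcdf_le_integral_sinrCcdf hp.le hζ_anti hξ_anti hρ0 (by nlinarith)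

/-- The approximated outage probability is nonincreasing in the reference-link
transmit power `W_s`: for `0 < Ws₁ ≤ Ws₂`,
`∫_0^∞ W(z) f(z|Ws₂) dz ≤ ∫_0^∞ W(z) f(z|Ws₁) dz`, where
`ζ(Ws) = κπd²(Wp/Ws)^(2/α)` and `ξ(Ws) = ηd^α/Ws`. -/
theorem stmt_15
    (α lam d Wp η κ : ℝ)
    (hα : 2 < α) (hlam : 0 < lam) (hd : 0 < d) (hWp : 0 < Wp) (hη : 0 ≤ η) (hκ : 0 < κ)
    (ζ ξ : ℝ → ℝ)
    (hζ : ∀ Ws > (0:ℝ), ζ Ws = κ * Real.pi * d ^ 2 * (Wp / Ws) ^ (2/α))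
    (hξ : ∀ Ws > (0:ℝ), ξ Ws = η * d ^ α / Ws)
    (f : ℝ → ℝ → ℝ)
    (hf : ∀ Ws > (0:ℝ), ∀ z > (0:ℝ),
      f Ws z = (2 * ζ Ws * lam / α * z ^ (2/α - 1) + ξ Ws) *
        Real.exp (-(ζ Ws * lam * z ^ (2/α)) - ξ Ws * z))
    (n R θ β ϑ ρ : ℝ) (hn : 0 < n) (hR : 0 < R)
    (hθ : θ = 2 ^ R - 1)
    (hβ : β = Real.sqrt (n / (2 * Real.pi)) * (2 ^ (2 * R) - 1) ^ (-(1:ℝ)/2))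
    (hϑ : ϑ = θ + Real.sqrt (Real.pi / 2) / β)
    (hρ : ρ = θ - Real.sqrt (Real.pi / 2) / β)
    (hρ0 : 0 ≤ ρ)
    (Wfn : ℝ → ℝ)
    (hWfn : ∀ t, Wfn t = if t ≤ ρ then 1
      else if t < ϑ then 1/2 - β / Real.sqrt (2 * Real.pi) * (t - θ) else 0) :
    ∀ Ws₁ Ws₂ : ℝ, 0 < Ws₁ → Ws₁ ≤ Ws₂ →
      ∫ z in Set.Ioi (0:ℝ), Wfn z * f Ws₂ z ≤ ∫ z in Set.Ioi (0:ℝ), Wfn z * f Ws₁ z :=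
  stmt_15_general α lam d Wp η κ hα hlam hd hWp hη hκ ζ ξ hζ hξ f hf n R θ β ϑ ρ hn hR hβ hϑ hρ hρ0
    Wfn hWfn
end
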